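/- Let μ > 0, t̄ = √(μ/(μ+1)), and p(t) = (8μ²+4μ)t^{2μ+2} − (8μ²+20μ+12)t^{2μ+4}, t̃ = √((2μ²+μ)/(2μ²+7μ+6)). Then p(t̄) = −8 μ^{μ+2}/(μ+1)^{μ+1} and p(t̃) < |p(t̄)|; equivalently (μ+1)^{μ+1}(μ+½)^{μ+2} < (μ+3/2)^{μ+1}(μ+2)^{μ+2} holds for all μ > 0. -/

import Mathlib

/-!
Substituting `t = √x` turns `p` into `4 (μ(2μ+1) - (2μ+3)(μ+1) x) x^(μ+1)`. At `x̄ = t̄²` the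
bracket is `-2μ`, and at `x̃ = t̃²` it is `2μ (2μ+1)/(2μ+4)`, so
`p t̃ = 8μ (2μ+1)/(2μ+4) x̃^(μ+1) < 8μ x̄^(μ+1) = |p t̄|` because `(2μ+1)/(2μ+4) < 1` and `x̃ < x̄`.
The last inequality compares bases termwise: `μ+1 < μ+3/2` and `μ+1/2 < μ+2`.
-/

open Real

lemma Real.sqrt_rpow_two_mul {x : ℝ} (hx : 0 ≤ x) (a : ℝ) : √x ^ (2 * a) = x ^ a := by
  rw [rpow_mul (sqrt_nonneg x), rpow_two, sq_sqrt hx]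

noncomputable def profile (μ t : ℝ) : ℝ :=
  (8*μ^2 + 4*μ) * t ^ (2*μ+2) - (8*μ^2 + 20*μ + 12) * t ^ (2*μ+4)

section

variable {μ : ℝ}

lemma profile_sqrt {x : ℝ} (hx : 0 < x) :
    profile μ (√x) = 4 * (μ * (2*μ+1) - (2*μ+3) * (μ+1) * x) * x ^ (μ+1) := by
  rw [profile, show 2*μ+2 = 2*(μ+1) by ring, show 2*μ+4 = 2*((μ+1)+1) by ring,
    sqrt_rpow_two_mul hx.le, sqrt_rpow_two_mul hx.le, rpow_add_one hx.ne' (μ+1)]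
  ring

lemma profile_sqrt_div_add_one (hμ : 0 < μ) :
    profile μ √(μ/(μ+1)) = -8 * μ * (μ/(μ+1)) ^ (μ+1) := by
  have hcoef : μ * (2*μ+1) - (2*μ+3) * (μ+1) * (μ/(μ+1)) = -2 * μ := by
    field_simp
    ring
  rw [profile_sqrt (by positivity), hcoef]
  ring

lemma profile_sqrt_quadratic_ratio (hμ : 0 < μ) :
    profile μ √((2*μ^2+μ)/(2*μ^2+7*μ+6))
      = 8 * μ * ((2*μ+1)/(2*μ+4)) * ((2*μ^2+μ)/(2*μ^2+7*μ+6)) ^ (μ+1) := by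
  have hcoef : μ * (2*μ+1) - (2*μ+3) * (μ+1) * ((2*μ^2+μ)/(2*μ^2+7*μ+6))
      = 2 * μ * ((2*μ+1)/(2*μ+4)) := by
    field_simp
    ring
  rw [profile_sqrt (by positivity), hcoef]
  ring

lemma quadratic_ratio_lt_div_add_one (hμ : 0 < μ) :
    (2*μ^2+μ)/(2*μ^2+7*μ+6) < μ/(μ+1) := by
  rw [div_lt_div_iff₀ (by positivity) (by positivity)]
  nlinarith

lemma mul_rpow_div_add_one (hμ : 0 < μ) (c : ℝ) :
    c * μ * (μ/(μ+1)) ^ (μ+1) = c * μ ^ (μ+2) / (μ+1) ^ (μ+1) := by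
  rw [div_rpow hμ.le (by linarith), show μ+2 = (μ+1)+1 by ring, rpow_add_one hμ.ne' (μ+1)]
  ring

end

theorem stmt13 (μ : ℝ) (hμ : 0 < μ) (p : ℝ → ℝ)
    (hp : ∀ t : ℝ, p t = (8*μ^2 + 4*μ) * t ^ (2*μ+2) - (8*μ^2 + 20*μ + 12) * t ^ (2*μ+4))
    (tbar ttil : ℝ)
    (htbar : tbar = Real.sqrt (μ/(μ+1)))
    (httil : ttil = Real.sqrt ((2*μ^2+μ)/(2*μ^2+7*μ+6))) :
    p tbar = -8 * μ ^ (μ+2) / (μ+1) ^ (μ+1) ∧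
    p ttil < |p tbar| ∧
    (μ+1) ^ (μ+1) * (μ+1/2) ^ (μ+2) < (μ+3/2) ^ (μ+1) * (μ+2) ^ (μ+2) := by
  obtain rfl : p = profile μ := funext hp
  subst htbar httil
  have hbar_pow_pos : 0 < (μ/(μ+1)) ^ (μ+1) := rpow_pos_of_pos (by positivity) _
  have hcoef_lt_one : (2*μ+1)/(2*μ+4) < 1 := (div_lt_one (by linarith)).2 (by linarith)
  rw [profile_sqrt_div_add_one hμ, profile_sqrt_quadratic_ratio hμ]
  refine ⟨mul_rpow_div_add_one hμ (-8), ?_, by gcongr <;> linarith⟩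
  rw [abs_of_neg (by nlinarith)]
  calc 8 * μ * ((2*μ+1)/(2*μ+4)) * ((2*μ^2+μ)/(2*μ^2+7*μ+6)) ^ (μ+1)
      < 8 * μ * ((2*μ^2+μ)/(2*μ^2+7*μ+6)) ^ (μ+1) :=
        mul_lt_mul_of_pos_right (by nlinarith) (rpow_pos_of_pos (by positivity) _)
    _ < 8 * μ * (μ/(μ+1)) ^ (μ+1) := by
        gcongr 8 * μ * ?_ ^ _
        exact quadratic_ratio_lt_div_add_one hμ
    _ = -(-8 * μ * (μ/(μ+1)) ^ (μ+1)) := by ring
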